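/- Let G be a group with a pseudo-norm ν, let n, d be integers with n − 1 > d ≥ 0, and let 1 ≤ i ≤ n − 1. Then for all g_1, …, g_n ∈ G one has ν_{(n−1,d)}(g_1,…,g_{i−1}, g_i g_{i+1}, g_{i+2},…,g_n) ≤ ν_{(n,d)}(g_1,…,g_n), i.e., merging two adjacent entries of the tuple by multiplication does not increase ν_{(·,d)}. -/

import Mathlib

/-- `ν` is a pseudo-norm on the group `G`: nonnegative, subadditive,
symmetric under inverses, and vanishing at the identity. -/
def IsPseudoNorm {G : Type*} [Group G] (ν : G → ℝ) : Prop :=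
  (∀ g : G, 0 ≤ ν g) ∧ (∀ g h : G, ν (g * h) ≤ ν g + ν h) ∧
    (∀ g : G, ν g⁻¹ = ν g) ∧ ν (1 : G) = 0

/-- `ν_{(n,d)}(g_1,…,g_n)`: the minimum over subsets `I ⊆ {1,…,n}` with
`|I| = n - d` of `∑_{i ∈ I} ν (g i)`. -/
noncomputable def nuNd {G : Type*} (ν : G → ℝ) {n : ℕ} (d : ℕ) (g : Fin n → G) : ℝ :=
  sInf {x : ℝ | ∃ I : Finset (Fin n), I.card = n - d ∧ x = ∑ i ∈ I, ν (g i)}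

/-!
Let `π : Fin (n + 1) → Fin n` be the map `Fin.predAbove i` identifying the positions `i` and
`i + 1`. By subadditivity, each entry of the merged tuple has norm at most the sum of the norms
of the entries in its fibre under `π`. Given `I` of size `n + 1 - d`, the positions whose whole
fibre lies in `I` form a set `J` missing at most `d` positions, and summing the fibre bound over
`J` shows that its total is at most the total over `I`.
-/

open Finset

lemma exists_card_eq_sum_le {α : Type*} {w : α → ℝ} (hw : ∀ a, 0 ≤ w a) {s : Finset α}
    {k : ℕ} (hk : k ≤ #s) : ∃ t : Finset α, #t = k ∧ ∑ a ∈ t, w a ≤ ∑ a ∈ s, w a := by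
  obtain ⟨t, hts, rfl⟩ := exists_subset_card_eq hk
  exact ⟨t, rfl, sum_le_sum_of_subset_of_nonneg hts fun a _ _ => hw a⟩

lemma exists_sum_le_of_le_sum_fiber {α β : Type*} [Fintype α] [Fintype β] [DecidableEq α]
    [DecidableEq β] {u : β → ℝ} {w : α → ℝ} (hw : ∀ a, 0 ≤ w a) (π : α → β)
    (hfiber : ∀ b, u b ≤ ∑ a with π a = b, w a) (I : Finset α) :
    ∃ J : Finset β, Fintype.card β - (Fintype.card α - #I) ≤ #J ∧
      ∑ b ∈ J, u b ≤ ∑ a ∈ I, w a := by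
  refine ⟨(Iᶜ.image π)ᶜ, ?_, ?_⟩
  · rw [card_compl]
    exact Nat.sub_le_sub_left (card_image_le.trans (card_compl I).le) _
  · have hfiber_in_I : ∀ b ∈ (Iᶜ.image π)ᶜ, ∀ a, π a = b → a ∈ I := fun b hb a hab =>
      by_contra fun ha => mem_compl.1 hb (mem_image.2 ⟨a, mem_compl.2 ha, hab⟩)
    calc ∑ b ∈ (Iᶜ.image π)ᶜ, u b
        ≤ ∑ b ∈ (Iᶜ.image π)ᶜ, ∑ a ∈ I with π a = b, w a := by
          refine sum_le_sum fun b hb => (hfiber b).trans_eq (sum_congr ?_ fun _ _ => rfl)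
          ext a
          simp only [mem_filter, mem_univ, true_and]
          exact ⟨fun hab => ⟨hfiber_in_I b hb a hab, hab⟩, And.right⟩
      _ ≤ ∑ b, ∑ a ∈ I with π a = b, w a :=
          sum_le_sum_of_subset_of_nonneg (subset_univ _) fun _ _ _ => sum_nonneg fun a _ => hw a
      _ = ∑ a ∈ I, w a := sum_fiberwise I π w

section nuNd

variable {G : Type*} {ν : G → ℝ} {n d : ℕ}

lemma nuNd_le_sum (hν : ∀ x, 0 ≤ ν x) (g : Fin n → G) {I : Finset (Fin n)}
    (hI : #I = n - d) :
    nuNd ν d g ≤ ∑ i ∈ I, ν (g i) :=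
  csInf_le ⟨0, by rintro _ ⟨J, -, rfl⟩; exact sum_nonneg fun j _ => hν _⟩ ⟨I, hI, rfl⟩

lemma le_nuNd {g : Fin n → G} {c : ℝ}
    (h : ∀ I : Finset (Fin n), #I = n - d → c ≤ ∑ i ∈ I, ν (g i)) : c ≤ nuNd ν d g := by
  obtain ⟨I, -, hI⟩ := exists_subset_card_eq (s := (univ : Finset (Fin n))) (n := n - d)
    (by simp)
  exact le_csInf ⟨_, I, hI, rfl⟩ (by rintro _ ⟨I, hI, rfl⟩; exact h I hI)

lemma nuNd_le_nuNd_of_le_sum_fiber (hν : ∀ x, 0 ≤ ν x) {m : ℕ} {f : Fin m → G}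
    {g : Fin n → G} (π : Fin n → Fin m) (hfiber : ∀ j, ν (f j) ≤ ∑ k with π k = j, ν (g k)) :
    nuNd ν d f ≤ nuNd ν d g := by
  refine le_nuNd fun I hI => ?_
  obtain ⟨J', hJ'card, hJ'sum⟩ := exists_sum_le_of_le_sum_fiber (fun k => hν (g k)) π hfiber I
  simp only [Fintype.card_fin, hI] at hJ'card
  obtain ⟨J, hJcard, hJsum⟩ :=
    exists_card_eq_sum_le (fun j => hν (f j)) (s := J') (k := m - d) (by omega)
  exact (nuNd_le_sum hν f hJcard).trans (hJsum.trans hJ'sum)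

end nuNd

lemma le_sum_predAbove_fiber {G : Type*} [Mul G] {ν : G → ℝ} (hν : ∀ x, 0 ≤ ν x)
    (hmul : ∀ x y, ν (x * y) ≤ ν x + ν y) {n : ℕ} (i : Fin n) (g : Fin (n + 1) → G)
    (j : Fin n) :
    ν (if (j : ℕ) < (i : ℕ) then g j.castSucc
        else if (j : ℕ) = (i : ℕ) then g j.castSucc * g j.succ
        else g j.succ)
      ≤ ∑ k with i.predAbove k = j, ν (g k) := by
  have hν' : ∀ k ∈ univ.filter (fun k => i.predAbove k = j), 0 ≤ ν (g k) := fun k _ => hν _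
  rcases lt_trichotomy j i with hji | rfl | hij
  · rw [if_pos (Fin.val_fin_lt.2 hji)]
    exact single_le_sum hν' (by simp [Fin.predAbove_castSucc_of_le i j hji.le])
  · have hpair : {j.castSucc, j.succ} ⊆ univ.filter (fun k => j.predAbove k = j) := by
      intro k hk
      rcases mem_insert.1 hk with rfl | hk <;> simp_all
    rw [if_neg (lt_irrefl _), if_pos rfl]
    calc ν (g j.castSucc * g j.succ) ≤ ν (g j.castSucc) + ν (g j.succ) := hmul _ _
      _ = ∑ k ∈ {j.castSucc, j.succ}, ν (g k) :=
          (sum_pair (f := fun k => ν (g k)) Fin.castSucc_lt_succ.ne).symm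
      _ ≤ _ := sum_le_sum_of_subset_of_nonneg hpair fun k _ _ => hν _
  · rw [if_neg (by simpa using hij.le), if_neg (Fin.val_ne_iff.2 hij.ne')]
    exact single_le_sum hν' (by simp [Fin.predAbove_succ_of_le i j hij.le])

theorem nuNd_contract_le_general {G : Type*} [Group G] (ν : G → ℝ) (hν : IsPseudoNorm ν)
    (n d : ℕ) (i : Fin n) (g : Fin (n + 1) → G) :
    nuNd ν d (fun j : Fin n =>
        if (j : ℕ) < (i : ℕ) then g j.castSucc
        else if (j : ℕ) = (i : ℕ) then g j.castSucc * g j.succ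
        else g j.succ)
      ≤ nuNd ν d g :=
  nuNd_le_nuNd_of_le_sum_fiber hν.1 i.predAbove (le_sum_predAbove_fiber hν.1 hν.2.1 i g)

/-- Merging two adjacent entries of a tuple by multiplication does not increase
`ν_{(·,d)}`: for `1 ≤ i ≤ n-1` (here `i : Fin n`, 0-based),
`ν_{(n-1,d)}(g_1,…,g_{i-1}, g_i g_{i+1}, g_{i+2},…,g_n) ≤ ν_{(n,d)}(g_1,…,g_n)`
whenever `n - 1 > d ≥ 0`. -/
theorem nuNd_contract_le {G : Type*} [Group G] (ν : G → ℝ) (hν : IsPseudoNorm ν)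
    (n d : ℕ) (hd : d < n) (i : Fin n) (g : Fin (n + 1) → G) :
    nuNd ν d (fun j : Fin n =>
        if (j : ℕ) < (i : ℕ) then g j.castSucc
        else if (j : ℕ) = (i : ℕ) then g j.castSucc * g j.succ
        else g j.succ)
      ≤ nuNd ν d g :=
  nuNd_contract_le_general ν hν n d i g
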